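/- Every nontrivial planar binary rooted tree can be obtained from the single tree with one internal vertex (the Y tree) by iterated application of the operations ⊣ and ⊢ (choosing single trees from the resulting sets at each step); more precisely, the smallest set of trees containing the Y tree and closed under taking elements of s ⊣ t and s ⊢ t for s, t in the set contains all nontrivial trees. -/

import Mathlib

/-- Planar binary rooted trees: either the trivial tree `leaf` (drawn `|`)
or the grafting `node l r = l ∨ r` of two trees. -/
inductive PBT : Type
  | leaf : PBT
  | node : PBT → PBT → PBT
deriving DecidableEq

namespace PBT

/-- Number of internal vertices of a tree. -/
def size : PBT → ℕ
  | leaf => 0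
  | node l r => l.size + r.size + 1

/-- The dendriform sum of two trees, a set of trees:
`s + t = (s ⊣ t) ∪ (s ⊢ t)` with `s ⊣ t = sˡ ∨ (sʳ + t)`, `s ⊢ t = (s + tˡ) ∨ tʳ`,
and the trivial tree acting as neutral element. -/
def addT : PBT → PBT → Set PBT
  | leaf, t => {t}
  | node l r, leaf => {node l r}
  | node l r, node l' r' =>
      (fun x => node l x) '' addT r (node l' r') ∪
      (fun x => node x r') '' addT (node l r) l'
termination_by s t => s.size + t.size
decreasing_by all_goals (simp [size] <;> omega)

/-- The left operation `s ⊣ t := sˡ ∨ (sʳ + t)` on trees (with `s ⊣ | = s`),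
valued in sets of trees. -/
def leftT : PBT → PBT → Set PBT
  | leaf, _ => ∅
  | node l r, leaf => {node l r}
  | node l r, node l' r' => (fun x => node l x) '' addT r (node l' r')

/-- The right operation `s ⊢ t := (s + tˡ) ∨ tʳ` on trees (with `| ⊢ t = t`),
valued in sets of trees. -/
def rightT : PBT → PBT → Set PBT
  | _, leaf => ∅
  | leaf, t => {t}
  | node l r, node l' r' => (fun x => node x r') '' addT (node l r) l'

/-- Elementwise extension of `⊣` to sets of trees. -/
def leftS (S T : Set PBT) : Set PBT := ⋃ s ∈ S, ⋃ t ∈ T, leftT s t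

/-- Elementwise extension of `⊢` to sets of trees. -/
def rightS (S T : Set PBT) : Set PBT := ⋃ s ∈ S, ⋃ t ∈ T, rightT s t

/-- Elementwise extension of the sum `+` to sets of trees:
`S + T = (S ⊣ T) ∪ (S ⊢ T)`. -/
def addS (S T : Set PBT) : Set PBT := ⋃ s ∈ S, ⋃ t ∈ T, addT s t

/-- A nonempty finite set of nontrivial trees. -/
def Good (S : Set PBT) : Prop := S.Nonempty ∧ S.Finite ∧ ∀ t ∈ S, t ≠ leaf

end PBT

open PBT in
/-- Every nontrivial planar binary rooted tree is obtained from the one-vertex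
tree `Y` by iterated application of `⊣` and `⊢` (picking elements of the
resulting sets at each step): the smallest set of trees containing `Y` and
closed under taking elements of `s ⊣ t` and `s ⊢ t` contains every nontrivial
tree. -/
theorem generated_from_Y (P : Set PBT)
    (hY : PBT.node PBT.leaf PBT.leaf ∈ P)
    (hleft : ∀ s ∈ P, ∀ t ∈ P, ∀ u ∈ leftT s t, u ∈ P)
    (hright : ∀ s ∈ P, ∀ t ∈ P, ∀ u ∈ rightT s t, u ∈ P) :
    ∀ x : PBT, x ≠ PBT.leaf → x ∈ P := by
  intro x
  induction x with
  | leaf => intro h; exact absurd rfl h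
  | node l r ihl ihr =>
    intro _
    rcases eq_or_ne l PBT.leaf with hl | hl
    · subst hl
      rcases eq_or_ne r PBT.leaf with hr | hr
      · subst hr; exact hY
      · have hr' := ihr hr
        have hm : PBT.node PBT.leaf r ∈ leftT (PBT.node PBT.leaf PBT.leaf) r := by
          cases r with
          | leaf => exact absurd rfl hr
          | node a b => simp [leftT, addT]
        exact hleft _ hY _ hr' _ hm
    · have hl' := ihl hl
      have hL : PBT.node l PBT.leaf ∈ P := by
        have hm : PBT.node l PBT.leaf ∈ rightT l (PBT.node PBT.leaf PBT.leaf) := by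
          cases l with
          | leaf => exact absurd rfl hl
          | node a b => simp [rightT, addT]
        exact hright _ hl' _ hY _ hm
      rcases eq_or_ne r PBT.leaf with hr | hr
      · subst hr; exact hL
      · have hr' := ihr hr
        have hm : PBT.node l r ∈ leftT (PBT.node l PBT.leaf) r := by
          cases r with
          | leaf => exact absurd rfl hr
          | node a b => simp [leftT, addT]
        exact hleft _ hL _ hr' _ hm
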